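/- Let (V,f) be a nondegenerate symplectic space over a field F of characteristic ≠ 2. Then the Lie algebra 𝔰_f spanned by the tensors v⊗f_v is a simple Lie algebra. -/
import Mathlib


/-- The "pure tensor" `v ⊗ f_v`, viewed as the endomorphism `u ↦ f(v,u) • v` of `V`. -/
noncomputable def rk1 {F V : Type*} [Field F] [AddCommGroup V] [Module F V]
    (f : V →ₗ[F] V →ₗ[F] F) (v : V) : Module.End F V :=
  (f v).smulRight v

section aux
variable {F V : Type*} [Field F] [AddCommGroup V] [Module F V]
  (f : V →ₗ[F] V →ₗ[F] F)

lemma rk1_apply (v u : V) : rk1 f v u = f v u • v := rfl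

lemma skew (halt : ∀ v : V, f v v = 0) (v w : V) : f v w = - f w v := by
  have h := halt (v + w)
  simp [map_add, LinearMap.add_apply, halt] at h
  linear_combination h

lemma bracket_rk1_apply (v : V) (T : Module.End F V) (u : V) :
    ⁅rk1 f v, T⁆ u = f v (T u) • v - f v u • T v := by
  simp [Ring.lie_def, rk1_apply, LinearMap.sub_apply, Module.End.mul_apply, map_smul]

lemma double_bracket (halt : ∀ v : V, f v v = 0) (v : V) (T : Module.End F V) :
    ⁅rk1 f v, ⁅rk1 f v, T⁆⁆ = (-(2 * f v (T v))) • rk1 f v := by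
  ext u
  rw [bracket_rk1_apply, bracket_rk1_apply, bracket_rk1_apply]
  simp [map_sub, map_smul, halt, rk1_apply, smul_smul]
  module
end aux

section aux2
variable {F V : Type*} [Field F] [AddCommGroup V] [Module F V]
  (f : V →ₗ[F] V →ₗ[F] F)

/-- every element of the span satisfies the symplectic condition -/
lemma sp_of_mem (halt : ∀ v : V, f v v = 0) {T : Module.End F V}
    (hT : T ∈ Submodule.span F (Set.range (rk1 f))) (u w : V) :
    f (T u) w = - f u (T w) := by
  induction hT using Submodule.span_induction with
  | mem x hx =>
      obtain ⟨v, rfl⟩ := hx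
      simp only [rk1_apply, map_smul, LinearMap.smul_apply, smul_eq_mul]
      rw [skew f halt u v, skew f halt v w]
      ring
  | zero => simp
  | add x y _ _ hx hy => simp only [LinearMap.add_apply, map_add, hx, hy]; ring
  | smul c x _ hx => simp only [LinearMap.smul_apply, map_smul, hx, smul_eq_mul]; ring

lemma exists_noniso (h2 : (2:F) ≠ 0) (halt : ∀ v : V, f v v = 0)
    (hnd : ∀ v : V, (∀ w : V, f v w = 0) → v = 0)
    {T : Module.End F V} (hT : T ∈ Submodule.span F (Set.range (rk1 f)))
    (hT0 : T ≠ 0) : ∃ v, f v (T v) ≠ 0 := by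
  by_contra h
  push_neg at h
  apply hT0
  ext w
  simp only [LinearMap.zero_apply]
  apply hnd
  intro u
  rw [skew f halt (T w) u]
  -- polarization: f u (T w) + f w (T u) = 0
  have hpol : f u (T w) + f w (T u) = 0 := by
    have := h (u + w)
    simp only [map_add, LinearMap.add_apply, h u, h w] at this
    linear_combination this
  have hsp : f w (T u) = f u (T w) := by
    rw [skew f halt w (T u), sp_of_mem f halt hT u w]; ring
  have h20 : 2 * f u (T w) = 0 := by linear_combination hpol - hsp
  have ha : f u (T w) = 0 := by
    rcases mul_eq_zero.mp h20 with h' | h'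
    · exact absurd h' h2
    · exact h'
  simp [ha]
end aux2

section ideal
variable {F V : Type*} [Field F] [AddCommGroup V] [Module F V]
  (f : V →ₗ[F] V →ₗ[F] F)

lemma rk1_mem_span (v : V) : rk1 f v ∈ Submodule.span F (Set.range (rk1 f)) :=
  Submodule.subset_span ⟨v, rfl⟩

lemma step (h2 : (2:F) ≠ 0) (halt : ∀ v : V, f v v = 0)
    {I : Submodule F (Module.End F V)}
    (hI : ∀ a ∈ Submodule.span F (Set.range (rk1 f)), ∀ b ∈ I, ⁅a, b⁆ ∈ I)
    {T : Module.End F V} (hTI : T ∈ I) {v : V} (hv : f v (T v) ≠ 0) :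
    rk1 f v ∈ I := by
  have h1 : ⁅rk1 f v, T⁆ ∈ I := hI _ (rk1_mem_span f v) _ hTI
  have hdb : ⁅rk1 f v, ⁅rk1 f v, T⁆⁆ ∈ I := hI _ (rk1_mem_span f v) _ h1
  rw [double_bracket f halt] at hdb
  have hc : (-(2 * f v (T v))) ≠ 0 := by
    simpa using mul_ne_zero h2 hv
  have := I.smul_mem (-(2 * f v (T v)))⁻¹ hdb
  rwa [inv_smul_smul₀ hc] at this

lemma hop (h2 : (2:F) ≠ 0) (halt : ∀ v : V, f v v = 0)
    {I : Submodule F (Module.End F V)}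
    (hI : ∀ a ∈ Submodule.span F (Set.range (rk1 f)), ∀ b ∈ I, ⁅a, b⁆ ∈ I)
    {v : V} (hv : rk1 f v ∈ I) {w : V} (hw : f w v ≠ 0) : rk1 f w ∈ I := by
  apply step f h2 halt hI hv
  have : f w (rk1 f w v) = 0 := by
    simp [rk1_apply, map_smul, halt, smul_eq_mul]
  show f w (rk1 f v w) ≠ 0
  have : f w (rk1 f v w) = -(f w v * f w v) := by
    simp only [rk1_apply, map_smul, smul_eq_mul]
    rw [skew f halt v w]; ring
  rw [this]
  simpa using mul_ne_zero hw hw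

lemma propagate (h2 : (2:F) ≠ 0) (halt : ∀ v : V, f v v = 0)
    (hnd : ∀ v : V, (∀ w : V, f v w = 0) → v = 0)
    {I : Submodule F (Module.End F V)}
    (hI : ∀ a ∈ Submodule.span F (Set.range (rk1 f)), ∀ b ∈ I, ⁅a, b⁆ ∈ I)
    {v : V} (hv : rk1 f v ∈ I) (hv0 : v ≠ 0) (w : V) : rk1 f w ∈ I := by
  -- helper: nondegeneracy in the needed direction
  have key : ∀ x : V, x ≠ 0 → ∃ y, f x y ≠ 0 := by
    intro x hx
    by_contra h
    push_neg at h
    exact hx (hnd x h)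
  by_cases hw0 : w = 0
  · subst hw0
    have : rk1 f 0 = 0 := by ext u; simp [rk1_apply]
    rw [this]; exact I.zero_mem
  by_cases hwv : f w v ≠ 0
  · exact hop f h2 halt hI hv hwv
  push_neg at hwv
  obtain ⟨z, hz⟩ := key w hw0
  have hwz : f w z ≠ 0 := hz
  by_cases hzv : f z v ≠ 0
  · exact hop f h2 halt hI (hop f h2 halt hI hv hzv) hwz
  push_neg at hzv
  obtain ⟨b', hb'⟩ := key v hv0
  set b := b' with hbdef
  have hbv : f b v ≠ 0 := by
    rw [skew f halt b v]
    simpa using hb'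
  have hbI : rk1 f b ∈ I := hop f h2 halt hI hv hbv
  by_cases hwb : f w b ≠ 0
  · exact hop f h2 halt hI hbI hwb
  push_neg at hwb
  -- u = z + b
  have huv : f (z + b) v ≠ 0 := by
    rw [map_add, LinearMap.add_apply, hzv, zero_add]; exact hbv
  have huI : rk1 f (z + b) ∈ I := hop f h2 halt hI hv huv
  have hwu : f w (z + b) ≠ 0 := by
    rw [map_add, hwb, add_zero]; exact hwz
  exact hop f h2 halt hI huI hwu

end ideal

/-- For a nondegenerate symplectic space `(V,f)` over a field of
characteristic ≠ 2, the Lie algebra `𝔰_f = span{v ⊗ f_v}` is simple: its bracket is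
nontrivial and its only ideals are `0` and `𝔰_f`. -/
theorem stmt7 {F V : Type*} [Field F] [AddCommGroup V] [Module F V] [Nontrivial V]
    (h2 : (2 : F) ≠ 0)
    (f : V →ₗ[F] V →ₗ[F] F) (halt : ∀ v : V, f v v = 0)
    (hnd : ∀ v : V, (∀ w : V, f v w = 0) → v = 0) :
    (∃ a b : Module.End F V, a ∈ Submodule.span F (Set.range (rk1 f)) ∧
        b ∈ Submodule.span F (Set.range (rk1 f)) ∧ ⁅a, b⁆ ≠ 0) ∧
    ∀ I : Submodule F (Module.End F V), I ≤ Submodule.span F (Set.range (rk1 f)) →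
      (∀ a ∈ Submodule.span F (Set.range (rk1 f)), ∀ b ∈ I, ⁅a, b⁆ ∈ I) →
      I = ⊥ ∨ I = Submodule.span F (Set.range (rk1 f)) := by
  constructor
  · -- nontrivial bracket
    obtain ⟨v, hv0⟩ := exists_ne (0 : V)
    have : ∃ w, f v w ≠ 0 := by
      by_contra h; push_neg at h; exact hv0 (hnd v h)
    obtain ⟨w, hw⟩ := this
    refine ⟨rk1 f v, rk1 f w, rk1_mem_span f v, rk1_mem_span f w, ?_⟩
    intro hzero
    have hv : ⁅rk1 f v, rk1 f w⁆ v = (f w v * f v w) • v := by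
      rw [bracket_rk1_apply]
      simp [rk1_apply, map_smul, halt, smul_smul]
    rw [hzero] at hv
    simp only [LinearMap.zero_apply] at hv
    have hc : f w v * f v w ≠ 0 := by
      rw [skew f halt w v]
      simpa using mul_ne_zero hw hw
    exact hv0 (by
      have := hv.symm
      rw [smul_eq_zero] at this
      tauto)
  · intro I hle hI
    by_cases hbot : I = ⊥
    · exact Or.inl hbot
    right
    refine le_antisymm hle ?_
    -- find a nonzero T in I
    obtain ⟨T, hTI, hT0⟩ : ∃ T ∈ I, T ≠ 0 := by
      by_contra h
      push_neg at h
      exact hbot (by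
        ext x
        simp only [Submodule.mem_bot]
        exact ⟨fun hx => h x hx, fun hx => hx ▸ I.zero_mem⟩)
    obtain ⟨v, hv⟩ := exists_noniso f h2 halt hnd (hle hTI) hT0
    have hvI : rk1 f v ∈ I := step f h2 halt hI hTI hv
    have hv0 : v ≠ 0 := by
      intro h; subst h; simp at hv
    rw [Submodule.span_le]
    rintro _ ⟨w, rfl⟩
    exact propagate f h2 halt hnd hI hvI hv0 w
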